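/- Let G be a topological group acting continuously and transitively on a topological space X, and let S ⊆ G be a subsemigroup with nonempty interior. Then any invariant control set C of S on X (a closed set with cl(S·x) = C for all x ∈ C) has nonempty interior in X. -/

import Mathlib

theorem stmt_14_general {G X : Type*} [Group G] [TopologicalSpace G] [IsTopologicalGroup G]
    [SigmaCompactSpace G]
    [TopologicalSpace X] [T2Space X] [BaireSpace X]
    [MulAction G X] [ContinuousSMul G X] [MulAction.IsPretransitive G X]
    (S : Set G)
    (hint : (interior S).Nonempty)
    (C : Set X) (hCne : C.Nonempty)
    (hC : ∀ x ∈ C, closure ((fun g : G => g • x) '' S) = C) :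
    (interior C).Nonempty := by
  obtain ⟨x, hx⟩ := hCne
  obtain ⟨g, hg⟩ := hint
  have hSx : (fun g : G => g • x) '' S ⊆ C := hC x hx ▸ subset_closure
  exact ⟨g • x, interior_mono hSx <|
    (isOpenMap_smul_of_sigmaCompact x).image_interior_subset S ⟨g, hg, rfl⟩⟩

/-- Let `G` be a topological group acting continuously and
transitively on a space `X` (in a setting, e.g. `G` locally compact σ-compact and
`X` Hausdorff Baire, where orbit maps are open) and `S ⊆ G` a subsemigroup with
nonempty interior. Then any invariant control set `C` of `S` on `X` — a nonempty
closed set with `cl(S·x) = C` for every `x ∈ C` — has nonempty interior. -/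
theorem stmt_14 {G X : Type*} [Group G] [TopologicalSpace G] [IsTopologicalGroup G]
    [LocallyCompactSpace G] [SigmaCompactSpace G]
    [TopologicalSpace X] [T2Space X] [BaireSpace X]
    [MulAction G X] [ContinuousSMul G X] [MulAction.IsPretransitive G X]
    (S : Set G) (hS : ∀ a ∈ S, ∀ b ∈ S, a * b ∈ S)
    (hint : (interior S).Nonempty)
    (C : Set X) (hCne : C.Nonempty) (hCclosed : IsClosed C)
    (hC : ∀ x ∈ C, closure ((fun g : G => g • x) '' S) = C) :
    (interior C).Nonempty :=
  stmt_14_general S hint C hCne hC
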